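/- arXiv:2012.01807 — 2 statements merged into one kernel-verified Lean document; each statement's English description precedes it below -/
import Mathlib

section
/- The conditional expectation E(ζ φ(ζ)/Φ(ζ) | U = 1) satisfies (1/(σ Φ(μ₂))) ∫_{-∞}^{∞} ζ(y) φ(ζ(y)) φ(z(y)) dy = μ₂ (1 − ρ²) φ(μ₂)/Φ(μ₂). -/
open MeasureTheory Set

/-- Standard normal density. -/
noncomputable def phi (t : ℝ) : ℝ := Real.exp (-(t ^ 2) / 2) / Real.sqrt (2 * Real.pi)

/-- Standard normal cumulative distribution function. -/
noncomputable def Phi (x : ℝ) : ℝ := ∫ t in Set.Iic x, phi t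

/-
Completing the square, `φ(ζ) φ(z) = φ(μ₂) φ(w)` with `w = (z + ρ μ₂) / √(1 - ρ²)`, an affine
function of `y` in which `ζ = √(1 - ρ²) μ₂ + ρ w`. Substituting `w` for `y` turns the integral
into `σ √(1 - ρ²) φ(μ₂)` times the mean `√(1 - ρ²) μ₂` of `√(1 - ρ²) μ₂ + ρ W`, `W` standard normal.
-/

open ProbabilityTheory

lemma phi_eq_gaussianPDFReal : phi = gaussianPDFReal 0 1 := by
  ext t
  simp [phi, gaussianPDFReal_def, div_eq_inv_mul]

lemma phi_mul_phi_eq_of_sq_add_sq_eq {a b c d : ℝ} (h : a ^ 2 + b ^ 2 = c ^ 2 + d ^ 2) :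
    phi a * phi b = phi c * phi d := by
  simp only [phi, div_mul_div_comm, ← Real.exp_add]
  congr 2
  linarith

lemma integral_affine_mul_phi (a b : ℝ) : ∫ x, (a + b * x) * phi x = a := by
  have hid : Integrable (fun x : ℝ => x) (gaussianReal 0 1) :=
    (memLp_id_gaussianReal 1).integrable le_rfl
  calc ∫ x, (a + b * x) * phi x = ∫ x, (a + b * x) ∂gaussianReal 0 1 := by
        simp [integral_gaussianReal_eq_integral_smul, phi_eq_gaussianPDFReal, mul_comm]
    _ = a := by
        rw [integral_add (integrable_const a) (hid.const_mul b), integral_const_mul,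
          integral_id_gaussianReal]
        simp

lemma integral_comp_sub_div {E : Type*} [NormedAddCommGroup E] [NormedSpace ℝ E]
    (g : ℝ → E) (c k : ℝ) : ∫ y, g ((y - c) / k) = |k| • ∫ x, g x := by
  rw [integral_sub_right_eq_self (fun y => g (y / k)) c, Measure.integral_comp_div]

theorem GH_zeta_hazard_conditional_mean (μ₁ μ₂ σ ρ : ℝ) (hσ : 0 < σ) (hρ₁ : -1 < ρ) (hρ₂ : ρ < 1)
    (z ζ : ℝ → ℝ)
    (hz : ∀ y, z y = (y - μ₁) / σ)
    (hζ : ∀ y, ζ y = (μ₂ + ρ * z y) / Real.sqrt (1 - ρ ^ 2)) :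
    (1 / (σ * Phi μ₂)) * ∫ y : ℝ, ζ y * phi (ζ y) * phi (z y)
      = μ₂ * (1 - ρ ^ 2) * phi μ₂ / Phi μ₂ := by
  set s := Real.sqrt (1 - ρ ^ 2)
  have hs2 : s ^ 2 = 1 - ρ ^ 2 := Real.sq_sqrt (by nlinarith)
  have hs : 0 < s := Real.sqrt_pos.2 (by nlinarith)
  set w : ℝ → ℝ := fun y => (y - (μ₁ - σ * ρ * μ₂)) / (σ * s)
  have hzw (y : ℝ) : z y = s * w y - ρ * μ₂ := by
    rw [hz]; simp only [w]; field_simp; ring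
  have hζw (y : ℝ) : ζ y = s * μ₂ + ρ * w y := by
    rw [hζ, hzw, div_eq_iff hs.ne']
    linear_combination (-μ₂) * hs2
  have hpt (y : ℝ) : ζ y * phi (ζ y) * phi (z y) = phi μ₂ * ((s * μ₂ + ρ * w y) * phi (w y)) := by
    rw [mul_assoc, phi_mul_phi_eq_of_sq_add_sq_eq (c := μ₂) (d := w y), hζw]
    · ring
    · rw [hζw, hzw]; linear_combination (μ₂ ^ 2 + w y ^ 2) * hs2
  have hint : ∫ y, ζ y * phi (ζ y) * phi (z y) = phi μ₂ * (σ * s * (s * μ₂)) := by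
    simp_rw [hpt, integral_const_mul]
    rw [integral_comp_sub_div (fun x => (s * μ₂ + ρ * x) * phi x), integral_affine_mul_phi,
      abs_of_pos (by positivity), smul_eq_mul]
  rw [hint, ← hs2]
  field_simp
end

section
/- The quantity Ψ appearing in the variance of the score residual is finite: the function y ↦ φ(z(y)) φ(ζ(y))² / Φ(ζ(y)) is integrable on ℝ. -/
/-!
For `t ≤ 0`, `Φ t ≥ ∫_{t-1}^{t} φ ≥ φ (t - 1)`, and `φ t ^ 2 / φ (t - 1)` equals
`exp ((2 - (t + 1) ^ 2) / 2) / √(2π) ≤ e`; so `φ ^ 2 / Φ ≤ e` on `(-∞, 0]`, and then on all of `ℝ`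
because `φ` decreases and `Φ` increases on `[0, ∞)`. Hence the integrand is at most `e · φ (z y)`,
a rescaled Gaussian density.
-/

open MeasureTheory Set

lemma one_le_sqrt_two_mul_pi : 1 ≤ Real.sqrt (2 * Real.pi) :=
  Real.one_le_sqrt.mpr (by nlinarith [Real.pi_gt_three])

lemma phi_pos (t : ℝ) : 0 < phi t :=
  div_pos (Real.exp_pos _) (zero_lt_one.trans_le one_le_sqrt_two_mul_pi)

lemma integrable_phi : Integrable phi := by
  refine ((integrable_exp_neg_mul_sq (b := 1 / 2) (by norm_num)).div_const
    (Real.sqrt (2 * Real.pi))).congr (.of_forall fun t => ?_)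
  simp only [phi]
  ring_nf

lemma phi_le_phi_of_le_of_nonpos {s t : ℝ} (hst : s ≤ t) (ht : t ≤ 0) : phi s ≤ phi t :=
  div_le_div_of_nonneg_right (Real.exp_le_exp.mpr (by nlinarith)) (Real.sqrt_nonneg _)

lemma phi_le_phi_zero (t : ℝ) : phi t ≤ phi 0 :=
  div_le_div_of_nonneg_right (Real.exp_le_exp.mpr (by nlinarith [sq_nonneg t]))
    (Real.sqrt_nonneg _)

lemma monotone_Phi : Monotone Phi := fun _ _ hab =>
  setIntegral_mono_set integrable_phi.integrableOn (.of_forall fun t => (phi_pos t).le)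
    (Iic_subset_Iic.mpr hab).eventuallyLE

lemma phi_sub_one_le_Phi {t : ℝ} (ht : t ≤ 0) : phi (t - 1) ≤ Phi t :=
  calc phi (t - 1) = ∫ _ in Ioc (t - 1) t, phi (t - 1) := by simp
    _ ≤ ∫ s in Ioc (t - 1) t, phi s :=
      setIntegral_mono_on (integrableOn_const (by simp)) integrable_phi.integrableOn
        measurableSet_Ioc fun s hs => phi_le_phi_of_le_of_nonpos hs.1.le (hs.2.trans ht)
    _ ≤ Phi t :=
      setIntegral_mono_set integrable_phi.integrableOn (.of_forall fun s => (phi_pos s).le)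
        Ioc_subset_Iic_self.eventuallyLE

lemma Phi_pos (t : ℝ) : 0 < Phi t := by
  rcases le_or_gt t 0 with ht | ht
  · exact (phi_pos _).trans_le (phi_sub_one_le_Phi ht)
  · exact ((phi_pos _).trans_le (phi_sub_one_le_Phi le_rfl)).trans_le (monotone_Phi ht.le)

lemma phi_sq_le_exp_one_mul_phi_sub_one (t : ℝ) : phi t ^ 2 ≤ Real.exp 1 * phi (t - 1) := by
  have hs := one_le_sqrt_two_mul_pi
  have hexp : Real.exp (-(t ^ 2) / 2) ^ 2 ≤ Real.exp 1 * Real.exp (-((t - 1) ^ 2) / 2) := by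
    rw [← Real.exp_nat_mul, ← Real.exp_add]
    gcongr
    push_cast
    nlinarith [sq_nonneg (t + 1)]
  calc phi t ^ 2 = Real.exp (-(t ^ 2) / 2) ^ 2 / Real.sqrt (2 * Real.pi) ^ 2 := div_pow ..
    _ ≤ Real.exp 1 * Real.exp (-((t - 1) ^ 2) / 2) / Real.sqrt (2 * Real.pi) := by
      gcongr
      exact le_self_pow₀ hs two_ne_zero
    _ = Real.exp 1 * phi (t - 1) := mul_div_assoc ..

lemma phi_sq_le_exp_one_mul_Phi (t : ℝ) : phi t ^ 2 ≤ Real.exp 1 * Phi t := by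
  rcases le_or_gt t 0 with ht | ht
  · exact (phi_sq_le_exp_one_mul_phi_sub_one t).trans (by gcongr; exact phi_sub_one_le_Phi ht)
  · calc phi t ^ 2 ≤ phi 0 ^ 2 := by gcongr; exacts [(phi_pos t).le, phi_le_phi_zero t]
      _ ≤ Real.exp 1 * phi (0 - 1) := phi_sq_le_exp_one_mul_phi_sub_one 0
      _ ≤ Real.exp 1 * Phi t := by
        gcongr
        exact (phi_sub_one_le_Phi le_rfl).trans (monotone_Phi ht.le)

lemma MeasureTheory.Integrable.mul_phi_sq_div_Phi {α : Type*} [MeasurableSpace α] {μ : Measure α}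
    {f g : α → ℝ} (hf : Integrable f μ) (hg : Measurable g) :
    Integrable (fun x => f x * (phi (g x) ^ 2 / Phi (g x))) μ := by
  refine hf.mul_bdd (c := Real.exp 1) ?_ (.of_forall fun x => ?_)
  · have hphi : Continuous phi := by unfold phi; fun_prop
    exact (((hphi.measurable.comp hg).pow_const 2).div
      (monotone_Phi.measurable.comp hg)).aestronglyMeasurable
  · have hP := Phi_pos (g x)
    rw [Real.norm_of_nonneg (by positivity), div_le_iff₀ hP]
    exact phi_sq_le_exp_one_mul_Phi (g x)

theorem GH_Psi_finite_general (μ₁ μ₂ σ ρ : ℝ) (hσ : 0 < σ)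
    (z ζ : ℝ → ℝ)
    (hz : ∀ y, z y = (y - μ₁) / σ)
    (hζ : ∀ y, ζ y = (μ₂ + ρ * z y) / Real.sqrt (1 - ρ ^ 2)) :
    Integrable (fun y : ℝ => phi (z y) * phi (ζ y) ^ 2 / Phi (ζ y)) := by
  obtain rfl : z = fun y => (y - μ₁) / σ := funext hz
  obtain rfl : ζ = _ := funext hζ
  simp_rw [mul_div_assoc]
  exact ((integrable_phi.comp_div hσ.ne').comp_sub_right μ₁).mul_phi_sq_div_Phi (by fun_prop)

theorem GH_Psi_finite (μ₁ μ₂ σ ρ : ℝ) (hσ : 0 < σ) (hρ₁ : -1 < ρ) (hρ₂ : ρ < 1)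
    (z ζ : ℝ → ℝ)
    (hz : ∀ y, z y = (y - μ₁) / σ)
    (hζ : ∀ y, ζ y = (μ₂ + ρ * z y) / Real.sqrt (1 - ρ ^ 2)) :
    Integrable (fun y : ℝ => phi (z y) * phi (ζ y) ^ 2 / Phi (ζ y)) :=
  GH_Psi_finite_general μ₁ μ₂ σ ρ hσ z ζ hz hζ
end
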